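/- arXiv:2509.26460 — 3 statements merged into one kernel-verified Lean document; each statement's English description precedes it below -/
import Mathlib

section
/- For every integer k ≥ 1 and every δ > 0, the integral ∫₀^{π/2} δ^{k+1} sin(t)^{k+1} / (δ² cos(t)² + δ^{2k} sin(t)^{2k}) dt is at most π/2. -/
open Real

-- derivative of arctan(δ^(m+1) sin^{m+1}/(δ cos))
lemma keyF (m : ℕ) (δ : ℝ) (hδ : 0 < δ) (t : ℝ) (hc : Real.cos t ≠ 0) :
    HasDerivAt (fun t => Real.arctan (δ^(m+1) * Real.sin t ^ (m+1) / (δ * Real.cos t)))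
      (δ^(m+2) * Real.sin t ^ m * ((m+1 : ℝ) * Real.cos t ^ 2 + Real.sin t ^ 2) /
        (δ^2 * Real.cos t ^ 2 + δ^(2*(m+1)) * Real.sin t ^ (2*(m+1)))) t := by
  have hN : HasDerivAt (fun t => δ^(m+1) * Real.sin t ^ (m+1))
      (δ^(m+1) * (((m+1 : ℕ) : ℝ) * Real.sin t ^ m * Real.cos t)) t := by
    simpa using ((Real.hasDerivAt_sin t).pow (m+1)).const_mul (δ^(m+1))
  have hD : HasDerivAt (fun t => δ * Real.cos t) (δ * (-Real.sin t)) t :=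
    (Real.hasDerivAt_cos t).const_mul δ
  have hDne : δ * Real.cos t ≠ 0 := mul_ne_zero hδ.ne' hc
  have hu := hN.div hD hDne
  have h := (Real.hasDerivAt_arctan (δ^(m+1) * Real.sin t ^ (m+1) / (δ * Real.cos t))).comp t hu
  refine h.congr_deriv ?_
  have hden : (0:ℝ) < δ^2 * Real.cos t ^ 2 + δ^(2*(m+1)) * Real.sin t ^ (2*(m+1)) := by
    have h2 : (0:ℝ) < δ^2 * Real.cos t ^ 2 := mul_pos (pow_pos hδ 2) (pow_two_pos_of_ne_zero hc)
    exact add_pos_of_pos_of_nonneg h2 (by rw [pow_mul, pow_mul]; positivity)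
  have h1 : (0:ℝ) < 1 + (δ^(m+1) * Real.sin t ^ (m+1) / (δ * Real.cos t))^2 := by positivity
  field_simp
  push_cast
  ring

lemma keyH (m : ℕ) (δ : ℝ) (hδ : 0 < δ) (t : ℝ) (hs : Real.sin t ≠ 0) :
    HasDerivAt (fun t => -Real.arctan (δ * Real.cos t / (δ^(m+1) * Real.sin t ^ (m+1))))
      (δ^(m+2) * Real.sin t ^ m * ((m+1 : ℝ) * Real.cos t ^ 2 + Real.sin t ^ 2) /
        (δ^2 * Real.cos t ^ 2 + δ^(2*(m+1)) * Real.sin t ^ (2*(m+1)))) t := by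
  have hN : HasDerivAt (fun t => δ * Real.cos t) (δ * (-Real.sin t)) t :=
    (Real.hasDerivAt_cos t).const_mul δ
  have hD : HasDerivAt (fun t => δ^(m+1) * Real.sin t ^ (m+1))
      (δ^(m+1) * (((m+1 : ℕ) : ℝ) * Real.sin t ^ m * Real.cos t)) t := by
    simpa using ((Real.hasDerivAt_sin t).pow (m+1)).const_mul (δ^(m+1))
  have hDne : δ^(m+1) * Real.sin t ^ (m+1) ≠ 0 :=
    mul_ne_zero (pow_ne_zero _ hδ.ne') (pow_ne_zero _ hs)
  have hu := hN.div hD hDne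
  have h := ((Real.hasDerivAt_arctan (δ * Real.cos t / (δ^(m+1) * Real.sin t ^ (m+1)))).comp t hu).neg
  refine h.congr_deriv ?_
  have h2 : (0:ℝ) < δ^(2*(m+1)) * Real.sin t ^ (2*(m+1)) := by
    rw [pow_mul, pow_mul]
    exact mul_pos (pow_pos (pow_pos hδ 2) _) (pow_pos (pow_two_pos_of_ne_zero hs) _)
  have hden : (0:ℝ) < δ^2 * Real.cos t ^ 2 + δ^(2*(m+1)) * Real.sin t ^ (2*(m+1)) :=
    add_pos_of_nonneg_of_pos (by positivity) h2
  have h1 : (0:ℝ) < 1 + (δ * Real.cos t / (δ^(m+1) * Real.sin t ^ (m+1)))^2 := by positivity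
  field_simp
  push_cast
  ring

theorem stmt3 (k : ℕ) (hk : 1 ≤ k) (δ : ℝ) (hδ : 0 < δ) :
    (∫ t in (0:ℝ)..(π/2),
      δ^(k+1) * Real.sin t ^ (k+1) /
        (δ^2 * Real.cos t ^ 2 + δ^(2*k) * Real.sin t ^ (2*k))) ≤ π / 2 := by
  obtain ⟨m, rfl⟩ : ∃ m, k = m + 1 := ⟨k - 1, by omega⟩
  have hpi := Real.pi_pos
  set f : ℝ → ℝ := fun t => δ^(m+1+1) * Real.sin t ^ (m+1+1) /
      (δ^2 * Real.cos t ^ 2 + δ^(2*(m+1)) * Real.sin t ^ (2*(m+1))) with hfdef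
  set g : ℝ → ℝ := fun t => δ^(m+2) * Real.sin t ^ m * ((m+1 : ℝ) * Real.cos t ^ 2 + Real.sin t ^ 2) /
      (δ^2 * Real.cos t ^ 2 + δ^(2*(m+1)) * Real.sin t ^ (2*(m+1))) with hgdef
  -- denominator positivity
  have hd : ∀ t : ℝ, 0 < δ^2 * Real.cos t ^ 2 + δ^(2*(m+1)) * Real.sin t ^ (2*(m+1)) := by
    intro t
    rcases eq_or_ne (Real.cos t) 0 with h | h
    · have hs : Real.sin t ≠ 0 := by
        intro hs0
        have := Real.sin_sq_add_cos_sq t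
        rw [h, hs0] at this; norm_num at this
      refine add_pos_of_nonneg_of_pos (by positivity) ?_
      rw [pow_mul, pow_mul]
      exact mul_pos (pow_pos (pow_pos hδ 2) _) (pow_pos (pow_two_pos_of_ne_zero hs) _)
    · refine add_pos_of_pos_of_nonneg (mul_pos (pow_pos hδ 2) (pow_two_pos_of_ne_zero h)) ?_
      rw [pow_mul, pow_mul]; positivity
  -- continuity & integrability
  have hfc : Continuous f := by
    apply Continuous.div (by fun_prop) (by fun_prop) (fun t => (hd t).ne')
  have hgc : Continuous g := by
    apply Continuous.div (by fun_prop) (by fun_prop) (fun t => (hd t).ne')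
  -- pointwise bound
  have hfg : ∀ t ∈ Set.Icc (0:ℝ) (π/2), f t ≤ g t := by
    intro t ht
    have hs : 0 ≤ Real.sin t :=
      Real.sin_nonneg_of_nonneg_of_le_pi ht.1 (ht.2.trans (by linarith))
    rw [hfdef, hgdef]
    simp only []
    rw [div_le_div_iff_of_pos_right (hd t)]
    calc δ^(m+1+1) * Real.sin t ^ (m+1+1) = δ^(m+2) * Real.sin t ^ m * Real.sin t ^ 2 := by ring
      _ ≤ δ^(m+2) * Real.sin t ^ m * ((m+1 : ℝ) * Real.cos t ^ 2 + Real.sin t ^ 2) := by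
          refine mul_le_mul_of_nonneg_left (le_add_of_nonneg_left (by positivity)) ?_
          exact mul_nonneg (by positivity) (pow_nonneg hs m)
  -- FTC on [0, π/4]
  have h1 : ∫ t in (0:ℝ)..(π/4), g t =
      Real.arctan (δ^(m+1) * Real.sin (π/4) ^ (m+1) / (δ * Real.cos (π/4)))
        - Real.arctan (δ^(m+1) * Real.sin 0 ^ (m+1) / (δ * Real.cos 0)) := by
    refine intervalIntegral.integral_eq_sub_of_hasDerivAt
      (f := fun t => Real.arctan (δ^(m+1) * Real.sin t ^ (m+1) / (δ * Real.cos t)))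
      (fun t ht => ?_) (hgc.intervalIntegrable _ _)
    rw [Set.uIcc_of_le (by linarith)] at ht
    refine keyF m δ hδ t (ne_of_gt ?_)
    exact Real.cos_pos_of_mem_Ioo ⟨by linarith [ht.1], by linarith [ht.2]⟩
  -- FTC on [π/4, π/2]
  have h2 : ∫ t in (π/4:ℝ)..(π/2), g t =
      (-Real.arctan (δ * Real.cos (π/2) / (δ^(m+1) * Real.sin (π/2) ^ (m+1))))
        - (-Real.arctan (δ * Real.cos (π/4) / (δ^(m+1) * Real.sin (π/4) ^ (m+1)))) := by
    refine intervalIntegral.integral_eq_sub_of_hasDerivAt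
      (f := fun t => -Real.arctan (δ * Real.cos t / (δ^(m+1) * Real.sin t ^ (m+1))))
      (fun t ht => ?_) (hgc.intervalIntegrable _ _)
    rw [Set.uIcc_of_le (by linarith)] at ht
    refine keyH m δ hδ t (ne_of_gt ?_)
    exact Real.sin_pos_of_pos_of_lt_pi (by linarith [ht.1]) (by linarith [ht.2])
  -- split and compare
  have hsplit : (∫ t in (0:ℝ)..(π/2), f t) =
      (∫ t in (0:ℝ)..(π/4), f t) + ∫ t in (π/4:ℝ)..(π/2), f t :=
    (intervalIntegral.integral_add_adjacent_intervals (hfc.intervalIntegrable _ _)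
      (hfc.intervalIntegrable _ _)).symm
  have hmono1 : (∫ t in (0:ℝ)..(π/4), f t) ≤ ∫ t in (0:ℝ)..(π/4), g t := by
    refine intervalIntegral.integral_mono_on (by linarith) (hfc.intervalIntegrable _ _)
      (hgc.intervalIntegrable _ _) (fun t ht => hfg t ⟨ht.1, by linarith [ht.2]⟩)
  have hmono2 : (∫ t in (π/4:ℝ)..(π/2), f t) ≤ ∫ t in (π/4:ℝ)..(π/2), g t := by
    refine intervalIntegral.integral_mono_on (by linarith) (hfc.intervalIntegrable _ _)
      (hgc.intervalIntegrable _ _) (fun t ht => hfg t ⟨by linarith [ht.1], ht.2⟩)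
  -- evaluate endpoints
  have hx : (0:ℝ) < δ^(m+1) * Real.sin (π/4) ^ (m+1) / (δ * Real.cos (π/4)) := by
    rw [Real.sin_pi_div_four, Real.cos_pi_div_four]
    positivity
  have e0 : Real.arctan (δ^(m+1) * Real.sin 0 ^ (m+1) / (δ * Real.cos 0)) = 0 := by
    simp [Real.sin_zero, zero_pow]
  have e2 : Real.arctan (δ * Real.cos (π/2) / (δ^(m+1) * Real.sin (π/2) ^ (m+1))) = 0 := by
    simp [Real.cos_pi_div_two]
  have e1 : Real.arctan (δ * Real.cos (π/4) / (δ^(m+1) * Real.sin (π/4) ^ (m+1))) =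
      π/2 - Real.arctan (δ^(m+1) * Real.sin (π/4) ^ (m+1) / (δ * Real.cos (π/4))) := by
    rw [← Real.arctan_inv_of_pos hx, inv_div]
  calc (∫ t in (0:ℝ)..(π/2), f t)
      = (∫ t in (0:ℝ)..(π/4), f t) + ∫ t in (π/4:ℝ)..(π/2), f t := hsplit
    _ ≤ (∫ t in (0:ℝ)..(π/4), g t) + ∫ t in (π/4:ℝ)..(π/2), g t := add_le_add hmono1 hmono2
    _ = π/2 := by rw [h1, h2, e0, e2, e1]; ring
end

section
/- Under the hypotheses of the previous setting (F(x,y) = (x(ν + a₁))² + ((μ/k!) y^k + x a₀ + b₀)² with a₀, a₁ = O(√(x²+y²)) and b₀ = O(y^{k+1})), there exist C > 0 and a neighborhood U of the origin such that C⁻¹ (x² + y^{2k}) ≤ F(x,y) ≤ C (x² + y^{2k}) for all (x,y) ∈ U. -/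
open Asymptotics Filter Topology

lemma L1 (u v : ℝ) (h : |v| ≤ |u|/2) : u^2/4 ≤ (u+v)^2 ∧ (u+v)^2 ≤ 3*u^2 := by
  have h1 : -(|u| * |v|) ≤ u*v := by
    have := neg_abs_le (u*v); rwa [abs_mul] at this
  have h2 : u*v ≤ |u| * |v| := by
    have := le_abs_self (u*v); rwa [abs_mul] at this
  constructor
  · nlinarith [abs_nonneg v, sq_abs u, sq_abs v, abs_nonneg u]
  · nlinarith [abs_nonneg v, sq_abs u, sq_abs v, abs_nonneg u]

lemma L2 (a c : ℝ) : a^2/2 - c^2 ≤ (a+c)^2 := by nlinarith [sq_nonneg (a+2*c)]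

lemma L3 (u v : ℝ) : (u+v)^2 ≤ 2*u^2+2*v^2 := by nlinarith [sq_nonneg (u-v)]

lemma L5 (u v w : ℝ) : (u+v+w)^2 ≤ 3*u^2+3*v^2+3*w^2 := by
  nlinarith [sq_nonneg (u-v), sq_nonneg (u-w), sq_nonneg (v-w)]

lemma L4 (a b : ℝ) (h : |a| ≤ b) : a^2 ≤ b^2 := by
  nlinarith [abs_nonneg a, sq_abs a, neg_abs_le a, le_abs_self a]

lemma key_pt (ν m ε X Y a1 a0 b : ℝ)
    (hεν : 4*ε ≤ |ν|) (hεm : 4*ε ≤ |m|) (hε1 : ε ≤ 1) (hε : 0 ≤ ε)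
    (h1 : |a1| ≤ |ν|/2) (h0 : |a0| ≤ ε) (hb : |b| ≤ ε * |Y|) :
    min (ν^2/8) (m^2/8) * (X^2 + Y^2) ≤ (X*(ν+a1))^2 + (m*Y + X*a0 + b)^2 ∧
    (X*(ν+a1))^2 + (m*Y + X*a0 + b)^2 ≤ (3*ν^2 + 3*m^2 + 3) * (X^2 + Y^2) := by
  have hX2 : (0:ℝ) ≤ X^2 := sq_nonneg X
  have hY2 : (0:ℝ) ≤ Y^2 := sq_nonneg Y
  have hεν2 : 16*ε^2 ≤ ν^2 := by nlinarith [sq_abs ν]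
  have hεm2 : 16*ε^2 ≤ m^2 := by nlinarith [sq_abs m]
  have hε2 : ε^2 ≤ 1 := by nlinarith
  obtain ⟨hA, hA'⟩ := L1 ν a1 h1
  have ha0sq : a0^2 ≤ ε^2 := L4 a0 ε h0
  have hbsq : b^2 ≤ ε^2 * Y^2 := by
    have := L4 b (ε * |Y|) hb
    calc b^2 ≤ (ε * |Y|)^2 := this
      _ = ε^2 * Y^2 := by rw [mul_pow, sq_abs]
  have hXν : X^2*(ν^2/4) ≤ (X*(ν+a1))^2 := by
    have := mul_le_mul_of_nonneg_left hA hX2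
    calc X^2*(ν^2/4) ≤ X^2*(ν+a1)^2 := this
      _ = (X*(ν+a1))^2 := by ring
  have hXν' : (X*(ν+a1))^2 ≤ X^2*(3*ν^2) := by
    have := mul_le_mul_of_nonneg_left hA' hX2
    calc (X*(ν+a1))^2 = X^2*(ν+a1)^2 := by ring
      _ ≤ X^2*(3*ν^2) := this
  have h8 : (X*a0)^2 ≤ X^2*ε^2 := by
    have := mul_le_mul_of_nonneg_left ha0sq hX2
    calc (X*a0)^2 = X^2*a0^2 := by ring
      _ ≤ X^2*ε^2 := this
  constructor
  · have h6 := L2 (m*Y) (X*a0+b)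
    have h7 := L3 (X*a0) b
    have hm1 : min (ν^2/8) (m^2/8) * X^2 ≤ ν^2/8 * X^2 :=
      mul_le_mul_of_nonneg_right (min_le_left _ _) hX2
    have hm2 : min (ν^2/8) (m^2/8) * Y^2 ≤ m^2/8 * Y^2 :=
      mul_le_mul_of_nonneg_right (min_le_right _ _) hY2
    have hp1 : X^2*(2*ε^2) ≤ X^2*(ν^2/8) := by
      apply mul_le_mul_of_nonneg_left _ hX2; linarith
    have hp2 : Y^2*(2*ε^2) ≤ Y^2*(m^2/8) := by
      apply mul_le_mul_of_nonneg_left _ hY2; linarith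
    have hmY : (m*Y)^2 = m^2*Y^2 := by ring
    linarith [h6, h7, hm1, hm2, hp1, hp2, hXν, hbsq, h8, mul_nonneg (sq_nonneg m) hY2]
  · have h4 := L5 (m*Y) (X*a0) b
    have hb1 : b^2 ≤ Y^2 := by
      have := mul_le_mul_of_nonneg_right hε2 hY2
      linarith [hbsq]
    have h81 : (X*a0)^2 ≤ X^2 := by
      have := mul_le_mul_of_nonneg_left hε2 hX2
      linarith [h8]
    linarith [h4, hXν', hb1, h81, mul_nonneg (sq_nonneg ν) hY2, mul_nonneg (sq_nonneg m) hX2]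

theorem stmt6 (k : ℕ) (hk : 1 ≤ k) (ν μ : ℝ) (hν : ν ≠ 0) (hμ : μ ≠ 0)
    (a₀ a₁ : ℝ × ℝ → ℝ) (b₀ : ℝ → ℝ)
    (ha₀c : Continuous a₀) (ha₁c : Continuous a₁) (hb₀c : Continuous b₀)
    (ha₀ : a₀ =O[𝓝 (0 : ℝ × ℝ)] fun p : ℝ × ℝ => Real.sqrt (p.1^2 + p.2^2))
    (ha₁ : a₁ =O[𝓝 (0 : ℝ × ℝ)] fun p : ℝ × ℝ => Real.sqrt (p.1^2 + p.2^2))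
    (hb₀ : b₀ =O[𝓝 (0:ℝ)] fun y : ℝ => y^(k+1)) :
    ∃ C > 0, ∃ U ∈ 𝓝 (0 : ℝ × ℝ), ∀ p ∈ U,
      C⁻¹ * (p.1^2 + p.2^(2*k)) ≤
        (p.1 * (ν + a₁ p))^2 + (μ / k.factorial * p.2^k + p.1 * a₀ p + b₀ p.2)^2 ∧
      (p.1 * (ν + a₁ p))^2 + (μ / k.factorial * p.2^k + p.1 * a₀ p + b₀ p.2)^2 ≤
        C * (p.1^2 + p.2^(2*k)) := by
  set m : ℝ := μ / k.factorial with hm_def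
  have hm : m ≠ 0 := div_ne_zero hμ (Nat.cast_ne_zero.mpr (Nat.factorial_ne_zero k))
  set ε : ℝ := min 1 (min (|ν|/4) (|m|/4)) with hε_def
  have hεpos : 0 < ε := by
    refine lt_min one_pos (lt_min ?_ ?_) <;> positivity
  have hεν : 4*ε ≤ |ν| := by
    have : ε ≤ |ν|/4 := le_trans (min_le_right _ _) (min_le_left _ _)
    linarith
  have hεm : 4*ε ≤ |m| := by
    have : ε ≤ |m|/4 := le_trans (min_le_right _ _) (min_le_right _ _)
    linarith
  have hε1 : ε ≤ 1 := min_le_left _ _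
  -- the constant
  have hminpos : 0 < min (ν^2/8) (m^2/8) := by
    refine lt_min ?_ ?_ <;> positivity
  set C : ℝ := max (min (ν^2/8) (m^2/8))⁻¹ (3*ν^2 + 3*m^2 + 3) with hC_def
  have hCpos : 0 < C := lt_of_lt_of_le (inv_pos.mpr hminpos) (le_max_left _ _)
  have hCinv : C⁻¹ ≤ min (ν^2/8) (m^2/8) := by
    rw [inv_le_comm₀ hCpos hminpos]
    exact le_max_left _ _
  have hCup : 3*ν^2 + 3*m^2 + 3 ≤ C := le_max_right _ _
  -- eventual bounds
  have hsq : Tendsto (fun p : ℝ × ℝ => Real.sqrt (p.1^2 + p.2^2)) (𝓝 0) (𝓝 0) := by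
    have hc : Continuous (fun p : ℝ × ℝ => Real.sqrt (p.1^2 + p.2^2)) :=
      ((continuous_fst.pow 2).add (continuous_snd.pow 2)).sqrt
    have := hc.tendsto 0
    simpa using this
  have hA1 : ∀ᶠ p : ℝ × ℝ in 𝓝 0, |a₁ p| ≤ |ν|/2 := by
    obtain ⟨c, hc⟩ := ha₁.bound
    have h2 : ∀ᶠ p : ℝ × ℝ in 𝓝 0, c * Real.sqrt (p.1^2 + p.2^2) < |ν|/2 := by
      have ht : Tendsto (fun p : ℝ × ℝ => c * Real.sqrt (p.1^2 + p.2^2)) (𝓝 0) (𝓝 0) := by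
        simpa using hsq.const_mul c
      exact ht.eventually_lt_const (by positivity)
    filter_upwards [hc, h2] with p h1 h2
    have : ‖a₁ p‖ ≤ c * Real.sqrt (p.1^2 + p.2^2) := by
      have hs : Real.sqrt (p.1^2 + p.2^2) = ‖Real.sqrt (p.1^2 + p.2^2)‖ := by
        rw [Real.norm_eq_abs, abs_of_nonneg (Real.sqrt_nonneg _)]
      rw [hs]; exact h1
    rw [Real.norm_eq_abs] at this
    linarith
  have hA0 : ∀ᶠ p : ℝ × ℝ in 𝓝 0, |a₀ p| ≤ ε := by
    obtain ⟨c, hc⟩ := ha₀.bound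
    have h2 : ∀ᶠ p : ℝ × ℝ in 𝓝 0, c * Real.sqrt (p.1^2 + p.2^2) < ε := by
      have ht : Tendsto (fun p : ℝ × ℝ => c * Real.sqrt (p.1^2 + p.2^2)) (𝓝 0) (𝓝 0) := by
        simpa using hsq.const_mul c
      exact ht.eventually_lt_const hεpos
    filter_upwards [hc, h2] with p h1 h2
    have : ‖a₀ p‖ ≤ c * Real.sqrt (p.1^2 + p.2^2) := by
      have hs : Real.sqrt (p.1^2 + p.2^2) = ‖Real.sqrt (p.1^2 + p.2^2)‖ := by
        rw [Real.norm_eq_abs, abs_of_nonneg (Real.sqrt_nonneg _)]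
      rw [hs]; exact h1
    rw [Real.norm_eq_abs] at this
    linarith
  have hB : ∀ᶠ y : ℝ in 𝓝 0, |b₀ y| ≤ ε * |y|^k := by
    obtain ⟨c, hc⟩ := hb₀.bound
    have h2 : ∀ᶠ y : ℝ in 𝓝 0, c * |y| < ε := by
      have ht : Tendsto (fun y : ℝ => c * |y|) (𝓝 0) (𝓝 0) := by
        have : Continuous (fun y : ℝ => c * |y|) := continuous_const.mul continuous_abs
        simpa using this.tendsto 0
      exact ht.eventually_lt_const hεpos
    filter_upwards [hc, h2] with y h1 h2
    rw [Real.norm_eq_abs, Real.norm_eq_abs, abs_pow] at h1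
    calc |b₀ y| ≤ c * |y|^(k+1) := h1
      _ = (c * |y|) * |y|^k := by ring
      _ ≤ ε * |y|^k := by
          apply mul_le_mul_of_nonneg_right (le_of_lt h2) (pow_nonneg (abs_nonneg y) k)
  have hBp : ∀ᶠ p : ℝ × ℝ in 𝓝 0, |b₀ p.2| ≤ ε * |p.2|^k := by
    have hsnd : Tendsto (Prod.snd : ℝ × ℝ → ℝ) (𝓝 0) (𝓝 0) := by
      simpa using (continuous_snd.tendsto (0 : ℝ × ℝ))
    exact hsnd.eventually hB
  refine ⟨C, hCpos, {p : ℝ × ℝ | |a₁ p| ≤ |ν|/2 ∧ |a₀ p| ≤ ε ∧ |b₀ p.2| ≤ ε * |p.2|^k},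
    ?_, ?_⟩
  · exact ((hA1.and (hA0.and hBp)) : _)
  · rintro ⟨x, y⟩ ⟨h1, h0, hb⟩
    have hbb : |b₀ y| ≤ ε * |y^k| := by rwa [abs_pow]
    have hkey := key_pt ν m ε x (y^k) (a₁ (x,y)) (a₀ (x,y)) (b₀ y)
      hεν hεm hε1 (le_of_lt hεpos) h1 h0 hbb
    have hy2k : y^(2*k) = (y^k)^2 := by rw [mul_comm, pow_mul]
    simp only [hy2k]
    constructor
    · refine le_trans ?_ hkey.1
      exact mul_le_mul_of_nonneg_right hCinv (by positivity)
    · refine le_trans hkey.2 ?_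
      exact mul_le_mul_of_nonneg_right hCup (by positivity)
end

section
/- Let ν, μ be nonzero reals, k ≥ 1 an integer, and let a₁, a₀ : ℝ² → ℝ, b₀ : ℝ → ℝ be continuous with a₁(0,0) = 0 and b₀(y) = O(y^{k+1}) as y → 0. Then there exists δ > 0 such that for every s ∈ [0,1], the only solution (x, y) with x² + y² ≤ δ² of the system x(ν + s a₁(x,y)) = 0 and (μ/k!) y^k + s x a₀(x,y) + s b₀(y) = 0 is (x, y) = (0, 0). -/
open Asymptotics Filter Topology

theorem stmt18 (k : ℕ) (hk : 1 ≤ k) (ν μ : ℝ) (hν : ν ≠ 0) (hμ : μ ≠ 0)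
    (a₀ a₁ : ℝ × ℝ → ℝ) (b₀ : ℝ → ℝ)
    (ha₀c : Continuous a₀) (ha₁c : Continuous a₁) (hb₀c : Continuous b₀)
    (ha₁0 : a₁ (0, 0) = 0)
    (hb₀ : b₀ =O[𝓝 (0:ℝ)] fun y : ℝ => y^(k+1)) :
    ∃ δ > 0, ∀ s ∈ Set.Icc (0:ℝ) 1, ∀ x y : ℝ, x^2 + y^2 ≤ δ^2 →
      x * (ν + s * a₁ (x, y)) = 0 →
      μ / k.factorial * y^k + s * x * a₀ (x, y) + s * b₀ y = 0 →
      x = 0 ∧ y = 0 := by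
  -- continuity of a₁ : find δ₁ with |a₁ p| < |ν| near 0
  have hca : ContinuousAt (fun p => |a₁ p|) ((0,0) : ℝ × ℝ) :=
    (ha₁c.continuousAt).abs
  have hlt : (fun p => |a₁ p|) ((0,0) : ℝ × ℝ) < |ν| := by
    simp only [ha₁0, abs_zero]; exact abs_pos.mpr hν
  have hev : ∀ᶠ p in 𝓝 ((0,0) : ℝ × ℝ), |a₁ p| < |ν| :=
    hca.eventually_lt continuousAt_const hlt
  rw [Metric.eventually_nhds_iff] at hev
  obtain ⟨δ₁, hδ₁, hball⟩ := hev
  -- big O bound for b₀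
  obtain ⟨C, hC⟩ := hb₀.bound
  rw [Metric.eventually_nhds_iff] at hC
  obtain ⟨ε, hε, hCb⟩ := hC
  set C' : ℝ := max C 1 with hC'
  have hC'pos : 0 < C' := lt_of_lt_of_le one_pos (le_max_right _ _)
  have hfacpos : (0:ℝ) < k.factorial := by positivity
  set M : ℝ := |μ| / k.factorial with hM
  have hMpos : 0 < M := by positivity
  set δ : ℝ := min (δ₁/2) (min (ε/2) (M / (2 * C'))) with hδdef
  have hδpos : 0 < δ := by positivity
  refine ⟨δ, hδpos, ?_⟩
  rintro s ⟨hs0, hs1⟩ x y hxy h1 h2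
  have hxle : |x| ≤ δ := by
    rw [abs_le]; constructor <;> nlinarith [sq_nonneg y, sq_nonneg (x+δ), sq_nonneg (x-δ)]
  have hyle : |y| ≤ δ := by
    rw [abs_le]; constructor <;> nlinarith [sq_nonneg x, sq_nonneg (y+δ), sq_nonneg (y-δ)]
  have hxz : x = 0 := by
    by_contra hx
    have hdist : dist ((x,y) : ℝ × ℝ) (0,0) < δ₁ := by
      rw [Prod.dist_eq]
      simp only [Real.dist_eq, sub_zero]
      have h1' : |x| < δ₁ :=
        lt_of_le_of_lt (hxle.trans (min_le_left _ _)) (by linarith)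
      have h2' : |y| < δ₁ :=
        lt_of_le_of_lt (hyle.trans (min_le_left _ _)) (by linarith)
      exact max_lt h1' h2'
    have ha := hball hdist
    have hν' : ν + s * a₁ (x, y) = 0 := by
      rcases mul_eq_zero.mp h1 with h | h
      · exact absurd h hx
      · exact h
    have : |ν| = |s * a₁ (x, y)| := by
      rw [abs_mul] at *
      have : ν = -(s * a₁ (x,y)) := by linarith
      rw [this, abs_neg, abs_mul]
    have hcontr : |s * a₁ (x, y)| ≤ |a₁ (x, y)| := by
      rw [abs_mul]
      calc |s| * |a₁ (x,y)| ≤ 1 * |a₁ (x,y)| := by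
            apply mul_le_mul_of_nonneg_right _ (abs_nonneg _)
            rw [abs_le]; constructor <;> linarith
        _ = |a₁ (x,y)| := one_mul _
    linarith [this ▸ hcontr, ha, this]
  refine ⟨hxz, ?_⟩
  by_contra hy
  have hyabs : 0 < |y| := abs_pos.mpr hy
  -- bound on b₀
  have hb : |b₀ y| ≤ C' * |y|^(k+1) := by
    have hdy : dist y 0 < ε := by
      rw [Real.dist_eq, sub_zero]
      exact lt_of_le_of_lt (hyle.trans ((min_le_right _ _).trans (min_le_left _ _))) (by linarith)
    have := hCb hdy
    simp only [Real.norm_eq_abs, abs_pow] at this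
    calc |b₀ y| ≤ C * |y|^(k+1) := this
      _ ≤ C' * |y|^(k+1) := by
          apply mul_le_mul_of_nonneg_right (le_max_left _ _) (by positivity)
  -- main equation after x = 0
  have heq : μ / k.factorial * y^k = -(s * b₀ y) := by
    subst hxz; linarith
  have habs : M * |y|^k = |s| * |b₀ y| := by
    have := congrArg abs heq
    rw [abs_neg, abs_mul, abs_mul, abs_div, abs_pow] at this
    simpa [hM, Nat.abs_cast] using this
  have hchain : M * |y|^k ≤ (M/2) * |y|^k := by
    calc M * |y|^k = |s| * |b₀ y| := habs
      _ ≤ 1 * |b₀ y| := by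
          apply mul_le_mul_of_nonneg_right _ (abs_nonneg _)
          rw [abs_le]; constructor <;> linarith
      _ = |b₀ y| := one_mul _
      _ ≤ C' * |y|^(k+1) := hb
      _ = (C' * |y|) * |y|^k := by ring
      _ ≤ (C' * (M / (2 * C'))) * |y|^k := by
          apply mul_le_mul_of_nonneg_right _ (by positivity)
          apply mul_le_mul_of_nonneg_left _ (le_of_lt hC'pos)
          exact hyle.trans ((min_le_right _ _).trans (min_le_right _ _))
      _ = (M/2) * |y|^k := by field_simp
  have : M ≤ M/2 := le_of_mul_le_mul_right (by linarith [hchain]) (by positivity : (0:ℝ) < |y|^k)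
  linarith
end
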